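/- Suppose P is two-sided and directionally atomless, that b⁺ ≥ (a⁺)² and b⁻ ≥ (a⁻)², and that (ρ'+a⁺, ρ'+a⁻) ≠ (0,0). Then F⁻ is coercive: for every M ∈ ℝ there exists R > 0 such that ‖K‖ ≥ R implies F⁻(K) ≥ M; i.e., F⁻(K) → +∞ as ‖K‖ → +∞ (Euclidean norm). -/

import Mathlib

/-!
Write `ψ x = (ρ' + a⁺) min x 0 + (ρ' + a⁻) max x 0` and `X = s + P'K`. Completing the square gives
`F⁻(K) = Var ψ(X) + γ⁻ E ψ(X) + (b⁺ - (a⁺)²) E[min(X, 0)²] + (b⁻ - (a⁻)²) E[max(X, 0)²]`,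
whose last two terms are nonnegative. As `ψ` is Lipschitz, removing the shift `s` costs a bounded
amount of variance and `E ψ(X)` grows at most linearly in `‖K‖`. The map `L ↦ Var ψ(P'L)` is
continuous and positively 2-homogeneous, and it is positive off `0`: `ψ` is injective on a
half-line that `P'L` charges, while `P'L` has no atoms. Hence it is at least `ε ‖L‖²`, and
`F⁻(K) ≥ ε ‖K‖² / 2 - O(‖K‖)`.
-/

open MeasureTheory

/-- The function `F⁻` from the paper, written with expectations as Bochner integrals.
Here `K'(E[PP'] − E[P]E[P'])K = E[⟪P,K⟫²] − (E[⟪P,K⟫])²` and `E[P']K = E[⟪P,K⟫]`. -/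
noncomputable def Fminus {Ω : Type*} [MeasurableSpace Ω] (ℙ : Measure Ω) {n : ℕ}
    (P : Ω → EuclideanSpace ℝ (Fin n)) (s ρ' γm ap am bp bm : ℝ)
    (K : EuclideanSpace ℝ (Fin n)) : ℝ :=
  let pk : Ω → ℝ := fun ω => inner ℝ (P ω) K
  let A : ℝ :=
    (∫ ω, ap * (s + pk ω) * (if s + pk ω ≤ 0 then (1:ℝ) else 0) ∂ℙ) +
    (∫ ω, am * (s + pk ω) * (if 0 < s + pk ω then (1:ℝ) else 0) ∂ℙ)
  ρ' ^ 2 * ((∫ ω, (pk ω) ^ 2 ∂ℙ) - (∫ ω, pk ω ∂ℙ) ^ 2) +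
  (∫ ω, (2 * ρ' * ap + bp) * (s + pk ω) ^ 2 * (if s + pk ω ≤ 0 then (1:ℝ) else 0) ∂ℙ) +
  (∫ ω, (2 * ρ' * am + bm) * (s + pk ω) ^ 2 * (if 0 < s + pk ω then (1:ℝ) else 0) ∂ℙ) -
  A ^ 2 - 2 * ρ' * A * (s + ∫ ω, pk ω ∂ℙ) + γm * A +
  ρ' * γm * (s + ∫ ω, pk ω ∂ℙ)

-- Closed before the main theorem: opening `ProbabilityTheory` makes `ℙ`, the name of its
-- measure binder, a notation.
section

open ProbabilityTheory Set Metric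
open scoped RealInnerProductSpace NNReal

noncomputable def kinked (cp cm x : ℝ) : ℝ := cp * min x 0 + cm * max x 0

section kinked

variable (cp cm : ℝ)

@[simp] lemma kinked_zero : kinked cp cm 0 = 0 := by simp [kinked]

lemma kinked_one_one (x : ℝ) : kinked 1 1 x = x := by
  simp [kinked, min_add_max]

lemma kinked_of_nonpos {x : ℝ} (hx : x ≤ 0) : kinked cp cm x = cp * x := by
  simp [kinked, hx]

lemma kinked_of_nonneg {x : ℝ} (hx : 0 ≤ x) : kinked cp cm x = cm * x := by
  simp [kinked, hx]

lemma kinked_mul_of_nonneg {t : ℝ} (ht : 0 ≤ t) (x : ℝ) :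
    kinked cp cm (t * x) = t * kinked cp cm x := by
  have hmin : min (t * x) 0 = t * min x 0 := by rw [mul_min_of_nonneg _ _ ht, mul_zero]
  have hmax : max (t * x) 0 = t * max x 0 := by rw [mul_max_of_nonneg _ _ ht, mul_zero]
  simp only [kinked, hmin, hmax]
  ring

lemma kinked_sq (x : ℝ) : kinked cp cm x ^ 2 = cp ^ 2 * min x 0 ^ 2 + cm ^ 2 * max x 0 ^ 2 := by
  rcases le_total x 0 with hx | hx <;> simp [kinked, hx, mul_pow]

lemma lipschitzWith_kinked : LipschitzWith (‖cp‖₊ + ‖cm‖₊) (kinked cp cm) := by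
  refine LipschitzWith.of_dist_le_mul fun x y => ?_
  simp only [Real.dist_eq, kinked, NNReal.coe_add, coe_nnnorm, Real.norm_eq_abs]
  have hmin : |min x 0 - min y 0| ≤ |x - y| := by
    simpa using abs_min_sub_min_le_max x 0 y 0
  calc |cp * min x 0 + cm * max x 0 - (cp * min y 0 + cm * max y 0)|
      = |cp * (min x 0 - min y 0) + cm * (max x 0 - max y 0)| := by ring_nf
    _ ≤ |cp| * |min x 0 - min y 0| + |cm| * |max x 0 - max y 0| := by
        rw [← abs_mul, ← abs_mul]; exact abs_add_le _ _
    _ ≤ |cp| * |x - y| + |cm| * |x - y| :=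
        add_le_add (mul_le_mul_of_nonneg_left hmin (abs_nonneg _))
          (mul_le_mul_of_nonneg_left (abs_max_sub_max_le_abs x y 0) (abs_nonneg _))
    _ = (|cp| + |cm|) * |x - y| := (add_mul _ _ _).symm

lemma injOn_kinked_Iic (hcp : cp ≠ 0) : InjOn (kinked cp cm) (Iic 0) := fun x hx y hy h => by
  rw [kinked_of_nonpos _ _ hx, kinked_of_nonpos _ _ hy] at h
  exact mul_left_cancel₀ hcp h

lemma injOn_kinked_Ici (hcm : cm ≠ 0) : InjOn (kinked cp cm) (Ici 0) := fun x hx y hy h => by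
  rw [kinked_of_nonneg _ _ hx, kinked_of_nonneg _ _ hy] at h
  exact mul_left_cancel₀ hcm h

end kinked

section integral

variable {Ω : Type*} [MeasurableSpace Ω] {μ : Measure Ω} {X : Ω → ℝ}

lemma integral_kinked (hX : Integrable X μ) (cp cm : ℝ) :
    ∫ ω, kinked cp cm (X ω) ∂μ = cp * ∫ ω, min (X ω) 0 ∂μ + cm * ∫ ω, max (X ω) 0 ∂μ := by
  have hmin : Integrable (fun ω => min (X ω) 0) μ := hX.inf (integrable_zero _ _ _)
  have hmax : Integrable (fun ω => max (X ω) 0) μ := hX.sup (integrable_zero _ _ _)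
  simp only [kinked]
  rw [integral_add (hmin.const_mul _) (hmax.const_mul _), integral_const_mul, integral_const_mul]

lemma integral_kinked_sq (hX : MemLp X 2 μ) (cp cm : ℝ) :
    ∫ ω, kinked cp cm (X ω) ^ 2 ∂μ =
      cp ^ 2 * ∫ ω, min (X ω) 0 ^ 2 ∂μ + cm ^ 2 * ∫ ω, max (X ω) 0 ^ 2 ∂μ := by
  have hmin : Integrable (fun ω => min (X ω) 0 ^ 2) μ := (hX.inf MemLp.zero).integrable_sq
  have hmax : Integrable (fun ω => max (X ω) 0 ^ 2) μ := (hX.sup MemLp.zero).integrable_sq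
  simp only [kinked_sq]
  rw [integral_add (hmin.const_mul _) (hmax.const_mul _), integral_const_mul, integral_const_mul]

end integral

section variance

variable {Ω : Type*} [MeasurableSpace Ω] {μ : Measure Ω}

lemma variance_add_le_two_mul [IsFiniteMeasure μ] {X Y : Ω → ℝ} (hX : MemLp X 2 μ)
    (hY : MemLp Y 2 μ) : Var[X + Y; μ] ≤ 2 * Var[X; μ] + 2 * Var[Y; μ] := by
  have hadd := variance_add hX hY
  have hsub := variance_sub hX hY
  linarith [variance_nonneg (X - Y) μ]

lemma variance_pos_of_injOn [IsFiniteMeasure μ] {Z : Ω → ℝ} {f : ℝ → ℝ} {S : Set ℝ}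
    (hf : MemLp (fun ω => f (Z ω)) 2 μ) (hinj : InjOn f S) (hS : μ (Z ⁻¹' S) ≠ 0)
    (hatom : ∀ c, μ {ω | Z ω = c} = 0) : 0 < Var[fun ω => f (Z ω); μ] := by
  refine (variance_nonneg _ _).lt_of_ne' fun hvar => hS ?_
  set m := μ[fun ω => f (Z ω)]
  have hconst : μ {ω | f (Z ω) ≠ m} = 0 := ae_iff.1 (ae_eq_integral_of_variance_eq_zero hf hvar)
  have hlevel : μ (Z ⁻¹' (S ∩ f ⁻¹' {m})) = 0 := by
    have hsub : (S ∩ f ⁻¹' {m}).Subsingleton := fun x hx y hy =>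
      hinj hx.1 hy.1 (hx.2.trans hy.2.symm)
    rcases hsub.eq_empty_or_singleton with h | ⟨c, h⟩
    · simp [h]
    · rw [h]; exact hatom c
  refine measure_mono_null (fun ω hω => ?_) (measure_union_null hlevel hconst)
  by_cases h : f (Z ω) = m
  · exact Or.inl ⟨hω, h⟩
  · exact Or.inr h

lemma variance_kinked_pos [IsFiniteMeasure μ] {Z : Ω → ℝ} (hZ : MemLp Z 2 μ) {cp cm : ℝ}
    (hc : cp ≠ 0 ∨ cm ≠ 0) (hneg : 0 < μ {ω | Z ω < 0}) (hpos : 0 < μ {ω | 0 < Z ω})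
    (hatom : ∀ c, μ {ω | Z ω = c} = 0) : 0 < Var[fun ω => kinked cp cm (Z ω); μ] := by
  have hψZ : MemLp (fun ω => kinked cp cm (Z ω)) 2 μ :=
    (lipschitzWith_kinked cp cm).comp_memLp (kinked_zero cp cm) hZ
  rcases hc with hcp | hcm
  · refine variance_pos_of_injOn hψZ (injOn_kinked_Iic cp cm hcp) ?_ hatom
    exact (hneg.trans_le (measure_mono fun ω (hω : Z ω < 0) => le_of_lt hω)).ne'
  · refine variance_pos_of_injOn hψZ (injOn_kinked_Ici cp cm hcm) ?_ hatom
    exact (hpos.trans_le (measure_mono fun ω (hω : 0 < Z ω) => le_of_lt hω)).ne'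

lemma LipschitzWith.variance_comp_le [IsProbabilityMeasure μ] {f : ℝ → ℝ} {K : ℝ≥0}
    (hf : LipschitzWith K f) (hf0 : f 0 = 0) {Z : Ω → ℝ} (hZ : MemLp Z 2 μ) (c : ℝ) :
    Var[fun ω => f (Z ω); μ] ≤ 2 * Var[fun ω => f (c + Z ω); μ] + 2 * (K * |c|) ^ 2 := by
  have hshift : MemLp (fun ω => f (c + Z ω)) 2 μ := hf.comp_memLp hf0 ((memLp_const c).add hZ)
  have hdiff : MemLp (fun ω => f (Z ω) - f (c + Z ω)) 2 μ := (hf.comp_memLp hf0 hZ).sub hshift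
  have hbound : Var[fun ω => f (Z ω) - f (c + Z ω); μ] ≤ (K * |c|) ^ 2 := by
    have hIcc : ∀ ω, f (Z ω) - f (c + Z ω) ∈ Icc (-(K * |c|)) (K * |c|) := fun ω => by
      rw [mem_Icc, ← abs_le]
      simpa [Real.dist_eq] using hf.dist_le_mul (Z ω) (c + Z ω)
    refine (variance_le_sq_of_bounded (ae_of_all _ hIcc) hdiff.aemeasurable).trans_eq ?_
    ring
  calc Var[fun ω => f (Z ω); μ]
      = Var[(fun ω => f (c + Z ω)) + fun ω => f (Z ω) - f (c + Z ω); μ] := by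
        congr 1; ext; simp
    _ ≤ 2 * Var[fun ω => f (c + Z ω); μ] + 2 * Var[fun ω => f (Z ω) - f (c + Z ω); μ] :=
        variance_add_le_two_mul hshift hdiff
    _ ≤ 2 * Var[fun ω => f (c + Z ω); μ] + 2 * (K * |c|) ^ 2 := by linarith

lemma LipschitzWith.abs_integral_comp_le {f : ℝ → ℝ} {K : ℝ≥0} (hf : LipschitzWith K f)
    (hf0 : f 0 = 0) {X : Ω → ℝ} (hX : Integrable X μ) :
    |∫ ω, f (X ω) ∂μ| ≤ K * ∫ ω, |X ω| ∂μ := by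
  have hfX : Integrable (fun ω => f (X ω)) μ :=
    memLp_one_iff_integrable.1 (hf.comp_memLp hf0 (memLp_one_iff_integrable.2 hX))
  rw [← integral_const_mul]
  refine abs_integral_le_integral_abs.trans (integral_mono hfX.abs (hX.abs.const_mul _) fun ω => ?_)
  simpa [Real.dist_eq, hf0] using hf.dist_le_mul (X ω) 0

end variance

lemma exists_pos_mul_sq_le_of_homogeneous {E : Type*} [NormedAddCommGroup E] [NormedSpace ℝ E]
    [ProperSpace E] {g : E → ℝ} (hg : Continuous g) (hpos : ∀ L ≠ 0, 0 < g L)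
    (hhom : ∀ t : ℝ, 0 ≤ t → ∀ L, g (t • L) = t ^ 2 * g L) :
    ∃ ε > 0, ∀ L, ε * ‖L‖ ^ 2 ≤ g L := by
  have hzero : g 0 = 0 := by simpa using hhom 0 le_rfl 0
  have hunit : ∀ L : E, L ≠ 0 → ‖L‖⁻¹ • L ∈ sphere (0 : E) 1 := fun L hL => by
    simp [norm_smul, hL]
  have hscale : ∀ L : E, L ≠ 0 → g L = ‖L‖ ^ 2 * g (‖L‖⁻¹ • L) := fun L hL => by
    rw [← hhom _ (norm_nonneg _), smul_smul, mul_inv_cancel₀ (norm_ne_zero_iff.2 hL), one_smul]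
  rcases (sphere (0 : E) 1).eq_empty_or_nonempty with hempty | hne
  · refine ⟨1, one_pos, fun L => ?_⟩
    obtain rfl : L = 0 := by_contra fun hL => by simpa [hempty] using hunit L hL
    simp [hzero]
  · obtain ⟨L₀, hL₀, hmin⟩ := (isCompact_sphere 0 1).exists_isMinOn hne hg.continuousOn
    refine ⟨g L₀, hpos L₀ (ne_of_mem_sphere hL₀ one_ne_zero), fun L => ?_⟩
    rcases eq_or_ne L 0 with rfl | hL
    · simp [hzero]
    · rw [hscale L hL, mul_comm]
      exact mul_le_mul_of_nonneg_left (hmin (hunit L hL)) (sq_nonneg _)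

lemma exists_forall_le_of_quadratic_growth {a : ℝ} (ha : 0 < a) (b c M : ℝ) :
    ∃ R > 0, ∀ r, R ≤ r → M ≤ a * r ^ 2 - b * r - c := by
  refine ⟨max 1 ((|b| + |c| + |M|) / a), by positivity, fun r hr => ?_⟩
  have hr1 : 1 ≤ r := (le_max_left _ _).trans hr
  have hra : |b| + |c| + |M| ≤ a * r := (div_le_iff₀' ha).1 ((le_max_right _ _).trans hr)
  have hr0 : 0 ≤ r := zero_le_one.trans hr1
  nlinarith [mul_le_mul_of_nonneg_left hra hr0, mul_le_mul_of_nonneg_right (le_abs_self b) hr0,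
    mul_nonneg (add_nonneg (abs_nonneg c) (abs_nonneg M)) (sub_nonneg.2 hr1), le_abs_self c,
    le_abs_self M]

section inner

variable {Ω : Type*} [MeasurableSpace Ω] {μ : Measure Ω}
  {E : Type*} [NormedAddCommGroup E] [InnerProductSpace ℝ E] {P : Ω → E}

lemma continuous_variance_comp_inner [IsProbabilityMeasure μ] (hP : MemLp P 2 μ) {f : ℝ → ℝ}
    {K : ℝ≥0} (hf : LipschitzWith K f) (hf0 : f 0 = 0) :
    Continuous fun L : E => Var[fun ω => f ⟪P ω, L⟫; μ] := by
  have hY : ∀ L, MemLp (fun ω => f ⟪P ω, L⟫) 2 μ := fun L => hf.comp_memLp hf0 (hP.inner_const L)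
  have hYcont : ∀ ω, Continuous fun L : E => f ⟪P ω, L⟫ := fun ω =>
    hf.continuous.comp (continuous_const.inner continuous_id)
  have hbound : ∀ R, ∀ L ∈ closedBall (0 : E) R, ∀ ω, |f ⟪P ω, L⟫| ≤ K * R * ‖P ω‖ := by
    intro R L hL ω
    rw [mem_closedBall_zero_iff] at hL
    calc |f ⟪P ω, L⟫| ≤ K * |⟪P ω, L⟫| := by
          simpa [Real.dist_eq, hf0] using hf.dist_le_mul ⟪P ω, L⟫ 0
      _ ≤ K * (‖P ω‖ * ‖L‖) := by gcongr; exact abs_real_inner_le_norm _ _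
      _ ≤ K * R * ‖P ω‖ := by
          rw [mul_comm (‖P ω‖), ← mul_assoc]
          exact mul_le_mul_of_nonneg_right (mul_le_mul_of_nonneg_left hL K.2) (norm_nonneg _)
  have hcont : ∀ R, ContinuousOn (fun L : E => Var[fun ω => f ⟪P ω, L⟫; μ]) (closedBall 0 R) := by
    intro R
    have hmean : ContinuousOn (fun L => ∫ ω, f ⟪P ω, L⟫ ∂μ) (closedBall 0 R) :=
      continuousOn_of_dominated (fun L _ => (hY L).1)
        (fun L hL => ae_of_all _ fun ω => hbound R L hL ω)
        ((hP.integrable one_le_two).norm.const_mul _)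
        (ae_of_all _ fun ω => (hYcont ω).continuousOn)
    have hsq : ContinuousOn (fun L => ∫ ω, f ⟪P ω, L⟫ ^ 2 ∂μ) (closedBall 0 R) := by
      refine continuousOn_of_dominated (fun L _ => (hY L).1.pow 2)
        (fun L hL => ae_of_all _ fun ω => ?_)
        (((memLp_two_iff_integrable_sq_norm hP.1).1 hP).const_mul ((K * R) ^ 2))
        (ae_of_all _ fun ω => ((hYcont ω).pow 2).continuousOn)
      rw [norm_pow, Real.norm_eq_abs, mul_pow]
      exact (pow_le_pow_left₀ (abs_nonneg _) (hbound R L hL ω) 2).trans_eq (by ring)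
    exact (hsq.sub (hmean.pow 2)).congr fun L _ => variance_eq_sub (hY L)
  exact continuous_iff_continuousAt.2 fun L =>
    (hcont (‖L‖ + 1)).continuousAt (closedBall_mem_nhds_of_mem (by simp))

lemma variance_kinked_inner_smul (cp cm : ℝ) {t : ℝ} (ht : 0 ≤ t) (L : E) :
    Var[fun ω => kinked cp cm ⟪P ω, t • L⟫; μ] =
      t ^ 2 * Var[fun ω => kinked cp cm ⟪P ω, L⟫; μ] := by
  simp_rw [real_inner_smul_right, kinked_mul_of_nonneg _ _ ht]
  exact variance_const_mul _ _ _

lemma integral_abs_add_inner_le [IsProbabilityMeasure μ] (hP : Integrable P μ) (s : ℝ) (K : E) :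
    ∫ ω, |s + ⟪P ω, K⟫| ∂μ ≤ |s| + ‖K‖ * ∫ ω, ‖P ω‖ ∂μ := by
  calc ∫ ω, |s + ⟪P ω, K⟫| ∂μ ≤ ∫ ω, (|s| + ‖K‖ * ‖P ω‖) ∂μ := by
        refine integral_mono ((integrable_const s).add (hP.inner_const K)).abs
          ((integrable_const _).add (hP.norm.const_mul _)) fun ω => ?_
        refine (abs_add_le _ _).trans (add_le_add le_rfl ?_)
        rw [mul_comm]
        exact abs_real_inner_le_norm _ _
    _ = |s| + ‖K‖ * ∫ ω, ‖P ω‖ ∂μ := by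
        rw [integral_add (integrable_const _) (hP.norm.const_mul _), integral_const_mul]
        simp

end inner

lemma Fminus_eq {Ω : Type*} [MeasurableSpace Ω] {μ : Measure Ω} [IsProbabilityMeasure μ] {n : ℕ}
    {P : Ω → EuclideanSpace ℝ (Fin n)} (hP : MemLp P 2 μ) (s ρ' γm ap am bp bm : ℝ)
    (K : EuclideanSpace ℝ (Fin n)) :
    Fminus μ P s ρ' γm ap am bp bm K =
      Var[fun ω => kinked (ρ' + ap) (ρ' + am) (s + ⟪P ω, K⟫); μ]
      + γm * ∫ ω, kinked (ρ' + ap) (ρ' + am) (s + ⟪P ω, K⟫) ∂μ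
      + (bp - ap ^ 2) * ∫ ω, min (s + ⟪P ω, K⟫) 0 ^ 2 ∂μ
      + (bm - am ^ 2) * ∫ ω, max (s + ⟪P ω, K⟫) 0 ^ 2 ∂μ := by
  have hpk : MemLp (fun ω => ⟪P ω, K⟫) 2 μ := hP.inner_const K
  have hX : MemLp (fun ω => s + ⟪P ω, K⟫) 2 μ := (memLp_const s).add hpk
  have hψX : MemLp (fun ω => kinked (ρ' + ap) (ρ' + am) (s + ⟪P ω, K⟫)) 2 μ :=
    (lipschitzWith_kinked _ _).comp_memLp (kinked_zero _ _) hX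
  have hvar := variance_const_add hpk.1 s
  rw [variance_eq_sub hX, variance_eq_sub hpk] at hvar
  have hmean : ∫ ω, (s + ⟪P ω, K⟫) ∂μ = s + ∫ ω, ⟪P ω, K⟫ ∂μ := by
    rw [integral_add (integrable_const s) (hpk.integrable one_le_two)]
    simp
  have hX1 := integral_kinked (hX.integrable one_le_two) 1 1
  have hX2 := integral_kinked_sq hX 1 1
  simp only [kinked_one_one] at hX1 hX2
  have hmin (a x : ℝ) : a * x * (if x ≤ 0 then (1 : ℝ) else 0) = a * min x 0 ∧
      a * x ^ 2 * (if x ≤ 0 then (1 : ℝ) else 0) = a * min x 0 ^ 2 := by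
    rcases le_or_gt x 0 with h | h
    · simp [h]
    · simp [not_le.2 h, h.le]
  have hmax (a x : ℝ) : a * x * (if 0 < x then (1 : ℝ) else 0) = a * max x 0 ∧
      a * x ^ 2 * (if 0 < x then (1 : ℝ) else 0) = a * max x 0 ^ 2 := by
    rcases le_or_gt x 0 with h | h
    · simp [h, not_lt.2 h]
    · simp [h, h.le]
  simp only [Fminus, hmin, hmax, integral_const_mul]
  rw [variance_eq_sub hψX]
  simp only [Pi.pow_apply] at hvar ⊢
  rw [integral_kinked (hX.integrable one_le_two), integral_kinked_sq hX, ← hvar, hX2, ← hmean, hX1]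
  ring

end

theorem Fminus_coercive_general {Ω : Type*} [MeasurableSpace Ω] (ℙ : Measure Ω)
    [IsProbabilityMeasure ℙ] {n : ℕ}
    (P : Ω → EuclideanSpace ℝ (Fin n)) (hmeas : Measurable P)
    (hL2 : Integrable (fun ω => ‖P ω‖ ^ 2) ℙ)
    (s ρ' γm ap am bp bm : ℝ)
    (htwosided : ∀ L : EuclideanSpace ℝ (Fin n), L ≠ 0 →
      0 < ℙ {ω | 0 < (inner ℝ (P ω) L : ℝ)} ∧ 0 < ℙ {ω | (inner ℝ (P ω) L : ℝ) < 0})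
    (hatomless : ∀ L : EuclideanSpace ℝ (Fin n), L ≠ 0 →
      ∀ c : ℝ, ℙ {ω | (inner ℝ (P ω) L : ℝ) = c} = 0)
    (hbp : ap ^ 2 ≤ bp) (hbm : am ^ 2 ≤ bm)
    (hne : (ρ' + ap, ρ' + am) ≠ ((0 : ℝ), (0 : ℝ))) :
    ∀ M : ℝ, ∃ R > (0 : ℝ), ∀ K : EuclideanSpace ℝ (Fin n),
      R ≤ ‖K‖ → M ≤ Fminus ℙ P s ρ' γm ap am bp bm K := by
  intro M
  have hP : MemLp P 2 ℙ := (memLp_two_iff_integrable_sq_norm hmeas.aestronglyMeasurable).2 hL2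
  have hc : ρ' + ap ≠ 0 ∨ ρ' + am ≠ 0 := by
    contrapose! hne
    rw [hne.1, hne.2]
  have hlip := lipschitzWith_kinked (ρ' + ap) (ρ' + am)
  obtain ⟨ε, hε, hεK⟩ := exists_pos_mul_sq_le_of_homogeneous
    (continuous_variance_comp_inner hP hlip (kinked_zero _ _))
    (fun L hL => variance_kinked_pos (hP.inner_const L) hc (htwosided L hL).2 (htwosided L hL).1
      (hatomless L hL))
    (fun t ht L => variance_kinked_inner_smul _ _ ht L)
  set C := ‖ρ' + ap‖₊ + ‖ρ' + am‖₊
  obtain ⟨R, hR, hRM⟩ := exists_forall_le_of_quadratic_growth (half_pos hε)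
    (|γm| * C * ∫ ω, ‖P ω‖ ∂ℙ) ((C * |s|) ^ 2 + |γm| * (C * |s|)) M
  refine ⟨R, hR, fun K hK => (hRM ‖K‖ hK).trans ?_⟩
  have hvar := hlip.variance_comp_le (kinked_zero _ _) (hP.inner_const K) s
  have hmean := (hlip.abs_integral_comp_le (kinked_zero _ _) (X := fun ω => s + inner ℝ (P ω) K)
    ((integrable_const s).add ((hP.integrable one_le_two).inner_const K))).trans
    (mul_le_mul_of_nonneg_left (integral_abs_add_inner_le (hP.integrable one_le_two) s K) C.2)
  have hlin := (abs_le.1 ((abs_mul γm _).trans_le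
    (mul_le_mul_of_nonneg_left hmean (abs_nonneg γm)))).1
  have hmin : 0 ≤ ∫ ω, min (s + inner ℝ (P ω) K) 0 ^ 2 ∂ℙ := integral_nonneg fun ω => sq_nonneg _
  have hmax : 0 ≤ ∫ ω, max (s + inner ℝ (P ω) K) 0 ^ 2 ∂ℙ := integral_nonneg fun ω => sq_nonneg _
  rw [Fminus_eq hP]
  linarith [hεK K, mul_nonneg (sub_nonneg.2 hbp) hmin, mul_nonneg (sub_nonneg.2 hbm) hmax]

/-- Coercivity of `F⁻`: under the two-sidedness, directional atomlessness,
`b⁺ ≥ (a⁺)²`, `b⁻ ≥ (a⁻)²` and `(ρ'+a⁺, ρ'+a⁻) ≠ (0,0)` assumptions,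
`F⁻(K) → +∞` as `‖K‖ → +∞`. -/
theorem Fminus_coercive {Ω : Type*} [MeasurableSpace Ω] (ℙ : Measure Ω)
    [IsProbabilityMeasure ℙ] {n : ℕ} (hn : 1 ≤ n)
    (P : Ω → EuclideanSpace ℝ (Fin n)) (hmeas : Measurable P)
    (hL2 : Integrable (fun ω => ‖P ω‖ ^ 2) ℙ)
    (s ρ' γm ap am bp bm : ℝ) (hs : 0 < s) (hρ : 0 < ρ')
    (htwosided : ∀ L : EuclideanSpace ℝ (Fin n), L ≠ 0 →
      0 < ℙ {ω | 0 < (inner ℝ (P ω) L : ℝ)} ∧ 0 < ℙ {ω | (inner ℝ (P ω) L : ℝ) < 0})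
    (hatomless : ∀ L : EuclideanSpace ℝ (Fin n), L ≠ 0 →
      ∀ c : ℝ, ℙ {ω | (inner ℝ (P ω) L : ℝ) = c} = 0)
    (hbp : ap ^ 2 ≤ bp) (hbm : am ^ 2 ≤ bm)
    (hne : (ρ' + ap, ρ' + am) ≠ ((0 : ℝ), (0 : ℝ))) :
    ∀ M : ℝ, ∃ R > (0 : ℝ), ∀ K : EuclideanSpace ℝ (Fin n),
      R ≤ ‖K‖ → M ≤ Fminus ℙ P s ρ' γm ap am bp bm K :=
  Fminus_coercive_general ℙ P hmeas hL2 s ρ' γm ap am bp bm htwosided hatomless hbp hbm hne
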